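/- arXiv:1404.3997 — 2 statements merged into one kernel-verified Lean document; each statement's English description precedes it below -/
import Mathlib

section
/- Under the memoryless action-dependent source setup, H(X^n, Y^n) = Σ_{i=1}^n [ I(X_i ; A_i) + H(X_i, Y_i | A_i) ]. -/
open Finset

/-- Probability that the random variable `X` takes the value `s`, under the pmf `p`. -/
noncomputable def probOf {Ω S : Type*} [Fintype Ω] [DecidableEq S]
    (p : Ω → ℝ) (X : Ω → S) (s : S) : ℝ :=
  ∑ ω : Ω, if X ω = s then p ω else 0

/-- Base-2 Shannon entropy of the random variable `X` under the pmf `p`. -/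
noncomputable def ent {Ω S : Type*} [Fintype Ω] [Fintype S] [DecidableEq S]
    (p : Ω → ℝ) (X : Ω → S) : ℝ :=
  ∑ s : S, Real.negMulLog (probOf p X s) / Real.log 2

/-- Conditional entropy `H(X | Y)` (base 2). -/
noncomputable def condEnt {Ω S T : Type*} [Fintype Ω] [Fintype S] [Fintype T]
    [DecidableEq S] [DecidableEq T] (p : Ω → ℝ) (X : Ω → S) (Y : Ω → T) : ℝ :=
  ent p (fun ω => (X ω, Y ω)) - ent p Y

/-- Mutual information `I(X ; Y)` (base 2). -/
noncomputable def mutInfo {Ω S T : Type*} [Fintype Ω] [Fintype S] [Fintype T]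
    [DecidableEq S] [DecidableEq T] (p : Ω → ℝ) (X : Ω → S) (Y : Ω → T) : ℝ :=
  ent p X + ent p Y - ent p (fun ω => (X ω, Y ω))

/-- Joint pmf of `(X^n, Y^n)` in the memoryless action-dependent source setup:
`X^n` i.i.d. `∼ μ`, `A^n = f X^n`, and conditionally on `X^n = x^n` the coordinates of `Y^n`
are independent with `Y_i ∼ W (x_i) (f x^n i)`. -/
noncomputable def jointPmf {n : ℕ} {𝒳 𝒜 𝒴 : Type*}
    (μ : 𝒳 → ℝ) (f : (Fin n → 𝒳) → (Fin n → 𝒜)) (W : 𝒳 → 𝒜 → 𝒴 → ℝ) :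
    (Fin n → 𝒳) × (Fin n → 𝒴) → ℝ :=
  fun ω => (∏ i, μ (ω.1 i)) * ∏ i, W (ω.1 i) (f ω.1 i) (ω.2 i)

/-!
Entropy is the expected surprisal `-log P(Z = Z ω)`. Let `mᵢ` be the law of `(Xᵢ, Aᵢ)`; summing
out the `Yⱼ`, `j ≠ i`, the law of `((Xᵢ, Yᵢ), Aᵢ)` is `mᵢ(x, a) W(y | x, a)`, while `Xᵢ ∼ μ`.
On the support of `p`, `-log p(xⁿ, yⁿ) = ∑ᵢ (-log μ(xᵢ) - log W(yᵢ | xᵢ, aᵢ))` and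
`mᵢ(xᵢ, aᵢ) ≥ ∏ⱼ μ(xⱼ) > 0`, so `-log W = -log (mᵢ W) + log mᵢ`. Hence the `i`-th summand is the
surprisal of `Xᵢ` plus that of `((Xᵢ, Yᵢ), Aᵢ)` minus that of `(Xᵢ, Aᵢ)`, whose expectation is
`H(Xᵢ) + H(Xᵢ, Yᵢ, Aᵢ) - H(Xᵢ, Aᵢ) = I(Xᵢ ; Aᵢ) + H(Xᵢ, Yᵢ | Aᵢ)`.
-/

open Real Function

section probOf

variable {Ω S T : Type*} [Fintype Ω] [DecidableEq S] [DecidableEq T]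

lemma probOf_comp_apply_of_injective (p : Ω → ℝ) (X : Ω → S) {e : S → T} (he : Injective e)
    (s : S) : probOf p (e ∘ X) (e s) = probOf p X s := by
  simp only [probOf, comp_apply, he.eq_iff]

lemma probOf_apply_self_of_injective (p : Ω → ℝ) {X : Ω → S} (hX : Injective X) (ω : Ω) :
    probOf p X (X ω) = p ω := by
  classical
  simp only [probOf, hX.eq_iff, sum_ite_eq', mem_univ, if_true]

lemma le_probOf_apply_self {p : Ω → ℝ} (hp : ∀ ω, 0 ≤ p ω) (X : Ω → S) (ω : Ω) :
    p ω ≤ probOf p X (X ω) := by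
  calc p ω = if X ω = X ω then p ω else 0 := (if_pos rfl).symm
    _ ≤ probOf p X (X ω) :=
      single_le_sum (f := fun ω' => if X ω' = X ω then p ω' else 0)
        (fun ω' _ => by split <;> simp [hp]) (mem_univ ω)

lemma ent_eq_sum_mul_neg_log [Fintype S] (p : Ω → ℝ) (X : Ω → S) :
    ent p X = (∑ ω, p ω * -log (probOf p X (X ω))) / log 2 := by
  rw [ent, ← sum_div]
  congr 1
  calc ∑ s, negMulLog (probOf p X s)
      = ∑ s, ∑ ω, if X ω = s then p ω * -log (probOf p X s) else 0 := by
        refine sum_congr rfl fun s _ => ?_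
        rw [negMulLog, neg_mul, ← mul_neg]
        generalize -log (probOf p X s) = q
        rw [probOf, sum_mul]
        exact sum_congr rfl fun ω _ => by split_ifs <;> simp
    _ = ∑ ω, p ω * -log (probOf p X (X ω)) := by
        rw [sum_comm]
        exact sum_congr rfl fun ω _ => by simp

end probOf

section kernel

variable {U V S T : Type*} [Fintype U] [Fintype V] [DecidableEq S] [DecidableEq T]
  (P : U → ℝ) {K : U → V → ℝ}

lemma probOf_mul_kernel_fst (hK : ∀ u, ∑ v, K u v = 1) (g : U → S) (s : S) :
    probOf (fun ω : U × V => P ω.1 * K ω.1 ω.2) (fun ω => g ω.1) s = probOf P g s := by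
  simp only [probOf, Fintype.sum_prod_type]
  refine sum_congr rfl fun u _ => ?_
  split_ifs
  · rw [← mul_sum, hK, mul_one]
  · exact sum_const_zero

lemma probOf_mul_kernel_prod (g : U → S) (h : V → T) (κ : S → T → ℝ)
    (hκ : ∀ u t, ∑ v, (if h v = t then K u v else 0) = κ (g u) t) (s : S) (t : T) :
    probOf (fun ω : U × V => P ω.1 * K ω.1 ω.2) (fun ω => (g ω.1, h ω.2)) (s, t)
      = probOf P g s * κ s t := by
  simp only [probOf, Fintype.sum_prod_type, Prod.mk.injEq, sum_mul]
  refine sum_congr rfl fun u _ => ?_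
  by_cases hu : g u = s
  · subst hu
    simp only [true_and, if_true, ← hκ u t, mul_sum, mul_ite, mul_zero]
  · simp [hu]

end kernel

lemma Fintype.sum_pi_ite_apply_eq {ι Y R : Type*} [Fintype ι] [DecidableEq ι] [Fintype Y]
    [DecidableEq Y] [CommSemiring R] (c : ι → Y → R) (i : ι) (y : Y) :
    ∑ v : ι → Y, (if v i = y then ∏ j, c j (v j) else 0)
      = c i y * ∏ j ∈ univ.erase i, ∑ z, c j z := by
  -- the constraint `v i = y` is absorbed into the `i`-th factor
  set c' : ι → Y → R := fun j z => if j = i ∧ z ≠ y then 0 else c j z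
  have hc' : ∀ v : ι → Y, (if v i = y then ∏ j, c j (v j) else 0) = ∏ j, c' j (v j) := by
    intro v
    split_ifs with hv
    · refine Finset.prod_congr rfl fun j _ => ?_
      simp only [c']
      rw [if_neg]
      rintro ⟨rfl, hj⟩
      exact hj hv
    · exact (prod_eq_zero (mem_univ i) (by simp [c', hv])).symm
  rw [Fintype.sum_congr _ _ hc', ← Fintype.prod_sum, ← mul_prod_erase univ _ (mem_univ i)]
  congr 1
  · simp [c']
  · exact Finset.prod_congr rfl fun j hj => by simp [c', ne_of_mem_erase hj]

section actionDependentSource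

variable {n : ℕ} {𝒳 𝒜 𝒴 : Type*} [Fintype 𝒴] (f : (Fin n → 𝒳) → (Fin n → 𝒜))
  {W : 𝒳 → 𝒜 → 𝒴 → ℝ}

lemma sum_prod_actionKernel (hW1 : ∀ x a, ∑ y, W x a y = 1) (u : Fin n → 𝒳) :
    ∑ v : Fin n → 𝒴, ∏ j, W (u j) (f u j) (v j) = 1 := by
  simp [← Fintype.prod_sum, hW1]

variable [Fintype 𝒳] [DecidableEq 𝒳] {μ : 𝒳 → ℝ}

lemma probOf_jointPmf_coord (hμ1 : ∑ x, μ x = 1) (hW1 : ∀ x a, ∑ y, W x a y = 1)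
    (i : Fin n) (x : 𝒳) : probOf (jointPmf μ f W) (fun ω => ω.1 i) x = μ x := by
  refine (probOf_mul_kernel_fst (fun u : Fin n → 𝒳 => ∏ j, μ (u j)) (sum_prod_actionKernel f hW1)
    (fun u => u i) x).trans ?_
  simp [probOf, Fintype.sum_pi_ite_apply_eq, hμ1]

lemma probOf_jointPmf_coord_action [DecidableEq 𝒜] (hW1 : ∀ x a, ∑ y, W x a y = 1)
    (i : Fin n) (x : 𝒳) (a : 𝒜) :
    probOf (jointPmf μ f W) (fun ω => (ω.1 i, f ω.1 i)) (x, a)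
      = probOf (fun u => ∏ j, μ (u j)) (fun u => (u i, f u i)) (x, a) :=
  probOf_mul_kernel_fst (fun u : Fin n → 𝒳 => ∏ j, μ (u j)) (sum_prod_actionKernel f hW1)
    (fun u => (u i, f u i)) (x, a)

lemma probOf_jointPmf_coord_output_action [DecidableEq 𝒜] [DecidableEq 𝒴]
    (hW1 : ∀ x a, ∑ y, W x a y = 1) (i : Fin n) (x : 𝒳) (y : 𝒴) (a : 𝒜) :
    probOf (jointPmf μ f W) (fun ω => ((ω.1 i, ω.2 i), f ω.1 i)) ((x, y), a)
      = probOf (fun u => ∏ j, μ (u j)) (fun u => (u i, f u i)) (x, a) * W x a y := by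
  have hswap : Injective fun s : (𝒳 × 𝒜) × 𝒴 => ((s.1.1, s.2), s.1.2) := by
    rintro ⟨⟨_, _⟩, _⟩ ⟨⟨_, _⟩, _⟩ h
    simp_all
  refine (probOf_comp_apply_of_injective _
    (fun ω : (Fin n → 𝒳) × (Fin n → 𝒴) => ((ω.1 i, f ω.1 i), ω.2 i)) hswap ((x, a), y)).trans ?_
  refine probOf_mul_kernel_prod (fun u : Fin n → 𝒳 => ∏ j, μ (u j))
    (K := fun u v => ∏ j, W (u j) (f u j) (v j)) (fun u => (u i, f u i))
    (fun v : Fin n → 𝒴 => v i) (fun s y => W s.1 s.2 y) (fun u y => ?_) (x, a) y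
  simp [Fintype.sum_pi_ite_apply_eq, hW1]

end actionDependentSource

lemma neg_log_jointPmf {n : ℕ} {𝒳 𝒜 𝒴 : Type*} [Fintype 𝒳] [DecidableEq 𝒳] [DecidableEq 𝒜]
    {μ : 𝒳 → ℝ} (hμ0 : ∀ x, 0 ≤ μ x) (f : (Fin n → 𝒳) → (Fin n → 𝒜)) {W : 𝒳 → 𝒜 → 𝒴 → ℝ}
    {ω : (Fin n → 𝒳) × (Fin n → 𝒴)} (hω : jointPmf μ f W ω ≠ 0) :
    -log (jointPmf μ f W ω)
      = ∑ i, (-log (μ (ω.1 i))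
          + -log (probOf (fun u => ∏ j, μ (u j)) (fun u => (u i, f u i)) (ω.1 i, f ω.1 i)
              * W (ω.1 i) (f ω.1 i) (ω.2 i))
          - -log (probOf (fun u => ∏ j, μ (u j)) (fun u => (u i, f u i)) (ω.1 i, f ω.1 i))) := by
  obtain ⟨hμ, hW⟩ := mul_ne_zero_iff.mp hω
  have hPpos : 0 < ∏ j, μ (ω.1 j) := (prod_nonneg fun j _ => hμ0 _).lt_of_ne' hμ
  have hm : ∀ i, probOf (fun u => ∏ j, μ (u j)) (fun u => (u i, f u i)) (ω.1 i, f ω.1 i) ≠ 0 :=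
    fun i => (hPpos.trans_le <| le_probOf_apply_self
      (fun u => prod_nonneg fun j _ => hμ0 (u j)) (fun u => (u i, f u i)) ω.1).ne'
  rw [prod_ne_zero_iff] at hμ hW
  calc -log (jointPmf μ f W ω)
      = ∑ i, (-log (μ (ω.1 i)) - log (W (ω.1 i) (f ω.1 i) (ω.2 i))) := by
        rw [jointPmf, log_mul (prod_ne_zero_iff.mpr hμ) (prod_ne_zero_iff.mpr hW), log_prod hμ,
          log_prod hW, sum_sub_distrib, sum_neg_distrib]
        ring
    _ = _ := sum_congr rfl fun i _ => by rw [log_mul (hm i) (hW i (mem_univ i))]; ring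

theorem stmt_2_general {n : ℕ} {𝒳 𝒜 𝒴 : Type*}
    [Fintype 𝒳] [DecidableEq 𝒳] [Fintype 𝒜] [DecidableEq 𝒜] [Fintype 𝒴] [DecidableEq 𝒴]
    (μ : 𝒳 → ℝ) (hμ0 : ∀ x, 0 ≤ μ x) (hμ1 : ∑ x, μ x = 1)
    (f : (Fin n → 𝒳) → (Fin n → 𝒜))
    (W : 𝒳 → 𝒜 → 𝒴 → ℝ) (hW1 : ∀ x a, ∑ y, W x a y = 1) :
    ent (jointPmf μ f W) (fun ω => (ω.1, ω.2))
      = ∑ i : Fin n,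
          (mutInfo (jointPmf μ f W) (fun ω => ω.1 i) (fun ω => f ω.1 i)
            + condEnt (jointPmf μ f W) (fun ω => (ω.1 i, ω.2 i)) (fun ω => f ω.1 i)) := by
  set p := jointPmf μ f W
  have hpoint : ∀ ω, p ω * -log (p ω)
      = ∑ i, (p ω * -log (probOf p (fun ω => ω.1 i) (ω.1 i))
          + p ω * -log (probOf p (fun ω => ((ω.1 i, ω.2 i), f ω.1 i)) ((ω.1 i, ω.2 i), f ω.1 i))
          - p ω * -log (probOf p (fun ω => (ω.1 i, f ω.1 i)) (ω.1 i, f ω.1 i))) := by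
    intro ω
    rcases eq_or_ne (p ω) 0 with hω | hω
    · simp [hω]
    simp only [p, probOf_jointPmf_coord f hμ1 hW1, probOf_jointPmf_coord_output_action f hW1,
      probOf_jointPmf_coord_action f hW1, neg_log_jointPmf hμ0 f hω, mul_sum, mul_sub, mul_add]
  calc ent p (fun ω => (ω.1, ω.2)) = (∑ ω, p ω * -log (p ω)) / log 2 := by
        simp only [ent_eq_sum_mul_neg_log,
          probOf_apply_self_of_injective p (X := fun ω => (ω.1, ω.2)) injective_id]
    _ = _ := by
        simp only [hpoint]
        rw [sum_comm, sum_div]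
        refine sum_congr rfl fun i _ => ?_
        simp only [mutInfo, condEnt, ent_eq_sum_mul_neg_log, sum_add_distrib, sum_sub_distrib]
        ring

/-- Under the memoryless action-dependent source setup,
`H(X^n, Y^n) = ∑ i, [ I(X_i ; A_i) + H(X_i, Y_i | A_i) ]`. -/
theorem stmt_2 {n : ℕ} {𝒳 𝒜 𝒴 : Type*}
    [Fintype 𝒳] [DecidableEq 𝒳] [Fintype 𝒜] [DecidableEq 𝒜] [Fintype 𝒴] [DecidableEq 𝒴]
    (μ : 𝒳 → ℝ) (hμ0 : ∀ x, 0 ≤ μ x) (hμ1 : ∑ x, μ x = 1)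
    (f : (Fin n → 𝒳) → (Fin n → 𝒜))
    (W : 𝒳 → 𝒜 → 𝒴 → ℝ) (hW0 : ∀ x a y, 0 ≤ W x a y) (hW1 : ∀ x a, ∑ y, W x a y = 1) :
    ent (jointPmf μ f W) (fun ω => (ω.1, ω.2))
      = ∑ i : Fin n,
          (mutInfo (jointPmf μ f W) (fun ω => ω.1 i) (fun ω => f ω.1 i)
            + condEnt (jointPmf μ f W) (fun ω => (ω.1 i, ω.2 i)) (fun ω => f ω.1 i)) :=
  stmt_2_general μ hμ0 hμ1 f W hW1
end

section
/- (Generalized cut-set bound at the second source node.) Under the memoryless action-dependent source setup, let M = g(Y^n) for any deterministic map g into a finite set. Then H(M) + H(Y^n | X^n, M) ≥ Σ_{i=1}^n H(Y_i | A_i, X_i). -/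
open Finset

/-!
Since `M` is a function of `Y^n`, relabelling gives `H(Y^n, X^n, M) = H(Y^n, X^n)`, and
subadditivity `H(X^n, M) ≤ H(X^n) + H(M)` then yields
`H(Y^n | X^n) ≤ H(M) + H(Y^n | X^n, M)`.
Given `X^n = x^n`, the law of `Y^n` is the product `∏ᵢ W(· | xᵢ, f(x^n)ᵢ)`, whose entropy is
`∑ᵢ H(W(· | xᵢ, f(x^n)ᵢ))`, and the law of `Yᵢ` is its `i`-th factor, which depends on `x^n`
only through `(Aᵢ, Xᵢ)`. Averaging over `x^n` gives `H(Y^n | X^n) = ∑ᵢ H(Yᵢ | Aᵢ, Xᵢ)`.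
-/

open Real Function

lemma negMulLog_prod {ι : Type*} [DecidableEq ι] (s : Finset ι) (q : ι → ℝ) :
    negMulLog (∏ j ∈ s, q j) = ∑ i ∈ s, negMulLog (q i) * ∏ j ∈ s.erase i, q j := by
  induction s using Finset.induction_on with
  | empty => simp
  | insert a s ha ih =>
    rw [prod_insert ha, negMulLog_mul, ih, sum_insert ha, erase_insert ha, mul_sum]
    congr 1
    · ring
    · refine sum_congr rfl fun i hi => ?_
      rw [erase_insert_of_ne (ne_of_mem_of_not_mem hi ha).symm,
        prod_insert fun h => ha (mem_of_mem_erase h)]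
      ring

section ProductPmf

variable {ι κ : Type*} [Fintype ι] [DecidableEq ι] [Fintype κ]

lemma sum_prod_eq_one_of_sum_eq_one {R : Type*} [CommSemiring R] (w : ι → κ → R)
    (hw : ∀ j, ∑ k, w j k = 1) : ∑ y : ι → κ, ∏ j, w j (y j) = 1 := by
  rw [← Fintype.prod_sum]
  exact prod_eq_one fun j _ => hw j

lemma sum_mul_prod_erase_of_sum_eq_one {R : Type*} [CommSemiring R] (w : ι → κ → R)
    (hw : ∀ j, ∑ k, w j k = 1) (i : ι) (v : κ → R) :
    ∑ y : ι → κ, v (y i) * ∏ j ∈ univ.erase i, w j (y j) = ∑ k, v k := by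
  have hupdate : ∀ y : ι → κ,
      v (y i) * ∏ j ∈ univ.erase i, w j (y j) = ∏ j, update w i v j (y j) := by
    intro y
    rw [← mul_prod_erase univ _ (mem_univ i), update_self]
    congr 1
    exact prod_congr rfl fun j hj => by rw [update_of_ne (ne_of_mem_erase hj)]
  rw [sum_congr rfl fun y _ => hupdate y, ← Fintype.prod_sum,
    ← mul_prod_erase univ _ (mem_univ i), update_self,
    prod_eq_one fun j hj => by rw [update_of_ne (ne_of_mem_erase hj), hw], mul_one]

lemma sum_ite_prod_of_sum_eq_one {R : Type*} [CommSemiring R] [DecidableEq κ]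
    (w : ι → κ → R) (hw : ∀ j, ∑ k, w j k = 1) (i : ι) (k₀ : κ) :
    ∑ y : ι → κ, (if y i = k₀ then ∏ j, w j (y j) else 0) = w i k₀ := by
  have hsplit : ∀ y : ι → κ, (if y i = k₀ then ∏ j, w j (y j) else 0)
      = (if y i = k₀ then w i (y i) else 0) * ∏ j ∈ univ.erase i, w j (y j) := by
    intro y
    split_ifs
    · exact (mul_prod_erase univ (fun j => w j (y j)) (mem_univ i)).symm
    · rw [zero_mul]
  rw [sum_congr rfl fun y _ => hsplit y,
    sum_mul_prod_erase_of_sum_eq_one w hw i fun k => if k = k₀ then w i k else 0, sum_ite_eq']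
  simp

lemma sum_negMulLog_prod_of_sum_eq_one (w : ι → κ → ℝ) (hw : ∀ j, ∑ k, w j k = 1) :
    ∑ y : ι → κ, negMulLog (∏ j, w j (y j)) = ∑ i, ∑ k, negMulLog (w i k) := by
  simp only [negMulLog_prod]
  rw [sum_comm]
  exact sum_congr rfl fun i _ =>
    sum_mul_prod_erase_of_sum_eq_one w hw i fun k => negMulLog (w i k)

end ProductPmf

lemma negMulLog_add_mul_log_le {q u : ℝ} (hq : 0 ≤ q) (hu : 0 < u) :
    negMulLog q + q * log u ≤ u - q := by
  rcases hq.eq_or_lt with rfl | hq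
  · simpa using hu.le
  calc negMulLog q + q * log u = q * log (u / q) := by
        rw [negMulLog, log_div hu.ne' hq.ne']; ring
    _ ≤ q * (u / q - 1) := mul_le_mul_of_nonneg_left (log_le_sub_one_of_pos (by positivity)) hq.le
    _ = u - q := by field_simp

lemma sum_negMulLog_le_sum_negMulLog_marginals {S T : Type*} [Fintype S] [Fintype T]
    (q : S → T → ℝ) (hq : ∀ s t, 0 ≤ q s t) (hq1 : ∑ s, ∑ t, q s t = 1) :
    ∑ s, ∑ t, negMulLog (q s t)
      ≤ ∑ s, negMulLog (∑ t, q s t) + ∑ t, negMulLog (∑ s, q s t) := by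
  set qS : S → ℝ := fun s => ∑ t, q s t
  set qT : T → ℝ := fun t => ∑ s, q s t
  have hqS : ∀ s t, q s t ≤ qS s := fun s t => single_le_sum (fun t _ => hq s t) (mem_univ t)
  have hqT : ∀ s t, q s t ≤ qT t := fun s t => single_le_sum (fun s _ => hq s t) (mem_univ s)
  have hpoint : ∀ s t, negMulLog (q s t) + (q s t * log (qS s) + q s t * log (qT t))
      ≤ qS s * qT t - q s t := by
    intro s t
    rcases (hq s t).eq_or_lt with h0 | hpos
    · rw [← h0]
      simpa using mul_nonneg ((hq s t).trans (hqS s t)) ((hq s t).trans (hqT s t))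
    have hS0 : 0 < qS s := hpos.trans_le (hqS s t)
    have hT0 : 0 < qT t := hpos.trans_le (hqT s t)
    have h := negMulLog_add_mul_log_le (hq s t) (mul_pos hS0 hT0)
    rwa [log_mul hS0.ne' hT0.ne', mul_add] at h
  have hS : ∑ s, ∑ t, q s t * log (qS s) = -∑ s, negMulLog (qS s) := by
    simp [negMulLog, ← sum_mul, qS]
  have hT : ∑ s, ∑ t, q s t * log (qT t) = -∑ t, negMulLog (qT t) := by
    rw [sum_comm]
    simp [negMulLog, ← sum_mul, qT]
  have hT1 : ∑ t, qT t = 1 := by rw [← hq1]; exact sum_comm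
  have hzero : ∑ s, ∑ t, (qS s * qT t - q s t) = 0 := by
    simp only [sum_sub_distrib, ← mul_sum, hT1, mul_one]
    exact sub_self _
  have hsum := sum_le_sum fun s (_ : s ∈ univ) => sum_le_sum fun t (_ : t ∈ univ) => hpoint s t
  simp only [sum_add_distrib] at hsum
  linarith

section Entropy

variable {Ω S T : Type*} [Fintype Ω] [DecidableEq S] [DecidableEq T] {p : Ω → ℝ}

lemma probOf_nonneg (hp : ∀ ω, 0 ≤ p ω) (X : Ω → S) (s : S) : 0 ≤ probOf p X s :=
  sum_nonneg fun ω _ => by split_ifs <;> simp [hp ω]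

lemma sum_probOf_mul [Fintype S] (p : Ω → ℝ) (X : Ω → S) (φ : S → ℝ) :
    ∑ s, probOf p X s * φ s = ∑ ω, p ω * φ (X ω) := by
  simp only [probOf, sum_mul, ite_mul, zero_mul]
  rw [sum_comm]
  simp

lemma sum_probOf [Fintype S] (p : Ω → ℝ) (X : Ω → S) : ∑ s, probOf p X s = ∑ ω, p ω := by
  simpa using sum_probOf_mul p X 1

lemma sum_probOf_pair_right [Fintype T] (p : Ω → ℝ) (X : Ω → S) (Y : Ω → T) (s : S) :
    ∑ t, probOf p (fun ω => (X ω, Y ω)) (s, t) = probOf p X s := by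
  simp only [probOf, Prod.mk.injEq]
  rw [sum_comm]
  refine sum_congr rfl fun ω _ => ?_
  by_cases h : X ω = s <;> simp [h]

lemma sum_probOf_pair_left [Fintype S] (p : Ω → ℝ) (X : Ω → S) (Y : Ω → T) (t : T) :
    ∑ s, probOf p (fun ω => (X ω, Y ω)) (s, t) = probOf p Y t := by
  simp only [probOf, Prod.mk.injEq]
  rw [sum_comm]
  refine sum_congr rfl fun ω _ => ?_
  by_cases h : Y ω = t <;> simp [h]

lemma ent_comp_of_injective [Fintype S] [Fintype T] (p : Ω → ℝ) {e : S → T} (he : Injective e)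
    (X : Ω → S) :
    ent p (fun ω => e (X ω)) = ent p X := by
  refine (Fintype.sum_of_injective e he _ _ (fun t ht => ?_) fun s => ?_).symm
  · have : probOf p (fun ω => e (X ω)) t = 0 :=
      sum_eq_zero fun ω _ => if_neg fun h => ht ⟨X ω, h⟩
    simp [this]
  · simp [probOf, he.eq_iff]

lemma ent_pair_le [Fintype S] [Fintype T] (hp : ∀ ω, 0 ≤ p ω) (hp1 : ∑ ω, p ω = 1)
    (X : Ω → S) (Y : Ω → T) :
    ent p (fun ω => (X ω, Y ω)) ≤ ent p X + ent p Y := by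
  simp only [ent, ← sum_div, ← add_div]
  refine div_le_div_of_nonneg_right ?_ (log_pos one_lt_two).le
  have h := sum_negMulLog_le_sum_negMulLog_marginals
    (fun s t => probOf p (fun ω => (X ω, Y ω)) (s, t)) (fun s t => probOf_nonneg hp _ _)
    (by simp only [sum_probOf_pair_right, sum_probOf, hp1])
  simpa only [Fintype.sum_prod_type, sum_probOf_pair_right, sum_probOf_pair_left] using h

lemma condEnt_le_ent_add_condEnt [Fintype S] [Fintype T] {M : Type*} [Fintype M]
    [DecidableEq M] (hp : ∀ ω, 0 ≤ p ω) (hp1 : ∑ ω, p ω = 1) (X : Ω → S) (Y : Ω → T) (g : T → M) :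
    condEnt p Y X ≤ ent p (fun ω => g (Y ω)) + condEnt p Y (fun ω => (X ω, g (Y ω))) := by
  have hinj : Injective fun yx : T × S => (yx.1, (yx.2, g yx.1)) := fun a b h => by
    simp only [Prod.mk.injEq] at h
    exact Prod.ext h.1 h.2.1
  have hrelabel : ent p (fun ω => (Y ω, (X ω, g (Y ω)))) = ent p (fun ω => (Y ω, X ω)) :=
    ent_comp_of_injective p hinj fun ω => (Y ω, X ω)
  have hsub := ent_pair_le hp hp1 X fun ω => g (Y ω)
  simp only [condEnt, hrelabel]
  linarith

lemma condEnt_eq_sum_of_probOf_pair [Fintype S] [Fintype T] (p : Ω → ℝ) (Y : Ω → S)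
    (Z : Ω → T) (K : T → S → ℝ) (hK : ∀ t, ∑ s, K t s = 1)
    (hYZ : ∀ s t, probOf p (fun ω => (Y ω, Z ω)) (s, t) = probOf p Z t * K t s) :
    condEnt p Y Z = ∑ ω, p ω * ∑ s, negMulLog (K (Z ω) s) / log 2 := by
  rw [← sum_probOf_mul p Z fun t => ∑ s, negMulLog (K t s) / log 2, condEnt, ent, ent,
    Fintype.sum_prod_type, sum_comm]
  simp only [hYZ, negMulLog_mul, add_div, sum_add_distrib, ← sum_mul, ← sum_div, hK, one_mul,
    mul_div_assoc, ← mul_sum]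
  ring

end Entropy

lemma probOf_pair_of_kernel {α β S T : Type*} [Fintype α] [Fintype β] [DecidableEq S]
    [DecidableEq T] (P : α → ℝ) (K : α → β → ℝ) (hK : ∀ x, ∑ y, K x y = 1)
    (U : β → S) (V : α → T) (L : T → S → ℝ)
    (hL : ∀ x s, ∑ y, (if U y = s then K x y else 0) = L (V x) s) (s : S) (t : T) :
    probOf (fun ω : α × β => P ω.1 * K ω.1 ω.2) (fun ω => (U ω.2, V ω.1)) (s, t)
      = probOf (fun ω : α × β => P ω.1 * K ω.1 ω.2) (fun ω => V ω.1) t * L t s := by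
  simp only [probOf, Fintype.sum_prod_type, Prod.mk.injEq]
  rw [sum_mul]
  refine sum_congr rfl fun x _ => ?_
  by_cases hx : V x = t
  · simp only [hx, and_true, if_true]
    rw [← mul_sum, hK, mul_one, ← hx, ← hL x s, mul_sum]
    exact sum_congr rfl fun y _ => by split_ifs <;> simp
  · simp [hx]

section JointPmf

variable {n : ℕ} {𝒳 𝒜 𝒴 : Type*} {μ : 𝒳 → ℝ} {f : (Fin n → 𝒳) → (Fin n → 𝒜)}
  {W : 𝒳 → 𝒜 → 𝒴 → ℝ}

lemma jointPmf_nonneg (hμ0 : ∀ x, 0 ≤ μ x) (hW0 : ∀ x a y, 0 ≤ W x a y)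
    (ω : (Fin n → 𝒳) × (Fin n → 𝒴)) : 0 ≤ jointPmf μ f W ω :=
  mul_nonneg (prod_nonneg fun _ _ => hμ0 _) (prod_nonneg fun _ _ => hW0 _ _ _)

lemma sum_jointPmf [Fintype 𝒳] [Fintype 𝒴] (hμ1 : ∑ x, μ x = 1)
    (hW1 : ∀ x a, ∑ y, W x a y = 1) : ∑ ω, jointPmf μ f W ω = 1 := by
  simp only [jointPmf, Fintype.sum_prod_type, ← mul_sum]
  simp only [sum_prod_eq_one_of_sum_eq_one _ fun j => hW1 _ _, mul_one]
  exact sum_prod_eq_one_of_sum_eq_one _ fun _ => hμ1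

lemma condEnt_jointPmf_eq_sum [Fintype 𝒳] [Fintype 𝒴] {S T : Type*} [Fintype S] [Fintype T]
    [DecidableEq S] [DecidableEq T] (hW1 : ∀ x a, ∑ y, W x a y = 1)
    (U : (Fin n → 𝒴) → S) (V : (Fin n → 𝒳) → T) (L : T → S → ℝ) (hL1 : ∀ t, ∑ s, L t s = 1)
    (hL : ∀ x s, ∑ y, (if U y = s then ∏ i, W (x i) (f x i) (y i) else 0) = L (V x) s) :
    condEnt (jointPmf μ f W) (fun ω => U ω.2) (fun ω => V ω.1)
      = ∑ ω, jointPmf μ f W ω * ∑ s, negMulLog (L (V ω.1) s) / log 2 :=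
  condEnt_eq_sum_of_probOf_pair _ _ _ L hL1 <|
    probOf_pair_of_kernel (fun x : Fin n → 𝒳 => ∏ i, μ (x i))
      (fun (x : Fin n → 𝒳) (y : Fin n → 𝒴) => ∏ i, W (x i) (f x i) (y i))
      (fun _ => sum_prod_eq_one_of_sum_eq_one _ fun _ => hW1 _ _) U V L hL

end JointPmf

/-- Generalized cut-set bound at the second source node: under the memoryless
action-dependent source setup, for `M = g (Y^n)` with `g` a deterministic map into a
finite set, `H(M) + H(Y^n | X^n, M) ≥ ∑ i, H(Y_i | A_i, X_i)`. -/
theorem stmt_4 {n : ℕ} {𝒳 𝒜 𝒴 ℳ : Type*}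
    [Fintype 𝒳] [DecidableEq 𝒳] [Fintype 𝒜] [DecidableEq 𝒜] [Fintype 𝒴] [DecidableEq 𝒴]
    [Fintype ℳ] [DecidableEq ℳ]
    (μ : 𝒳 → ℝ) (hμ0 : ∀ x, 0 ≤ μ x) (hμ1 : ∑ x, μ x = 1)
    (f : (Fin n → 𝒳) → (Fin n → 𝒜))
    (W : 𝒳 → 𝒜 → 𝒴 → ℝ) (hW0 : ∀ x a y, 0 ≤ W x a y) (hW1 : ∀ x a, ∑ y, W x a y = 1)
    (g : (Fin n → 𝒴) → ℳ) :
    ent (jointPmf μ f W) (fun ω => g ω.2)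
        + condEnt (jointPmf μ f W) (fun ω => ω.2) (fun ω => (ω.1, g ω.2))
      ≥ ∑ i : Fin n,
          condEnt (jointPmf μ f W) (fun ω => ω.2 i) (fun ω => (f ω.1 i, ω.1 i)) := by
  have hcoord : ∀ i, condEnt (jointPmf μ f W) (fun ω => ω.2 i) (fun ω => (f ω.1 i, ω.1 i))
      = ∑ ω, jointPmf μ f W ω * ∑ y, negMulLog (W (ω.1 i) (f ω.1 i) y) / log 2 := fun i =>
    condEnt_jointPmf_eq_sum hW1 (fun y => y i) (fun x => (f x i, x i))
      (fun ax y => W ax.2 ax.1 y) (fun _ => hW1 _ _)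
      fun x y => sum_ite_prod_of_sum_eq_one (fun j => W (x j) (f x j)) (fun _ => hW1 _ _) i y
  have hblock : condEnt (jointPmf μ f W) (fun ω => ω.2) (fun ω => ω.1)
      = ∑ ω, jointPmf μ f W ω * ∑ i, ∑ y, negMulLog (W (ω.1 i) (f ω.1 i) y) / log 2 := by
    rw [condEnt_jointPmf_eq_sum hW1 (fun y => y) (fun x => x)
      (fun x y => ∏ i, W (x i) (f x i) (y i))
      (fun _ => sum_prod_eq_one_of_sum_eq_one _ fun _ => hW1 _ _) fun x y => by simp]
    simp only [← sum_div, sum_negMulLog_prod_of_sum_eq_one _ fun _ => hW1 _ _]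
  calc ∑ i, condEnt (jointPmf μ f W) (fun ω => ω.2 i) (fun ω => (f ω.1 i, ω.1 i))
      = condEnt (jointPmf μ f W) (fun ω => ω.2) (fun ω => ω.1) := by
        simp only [hcoord, hblock, mul_sum]
        exact sum_comm
    _ ≤ _ := condEnt_le_ent_add_condEnt (jointPmf_nonneg hμ0 hW0) (sum_jointPmf hμ1 hW1) _ _ g
end
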